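/- arXiv:1709.02065 — 11 statements merged into one kernel-verified Lean document; each statement's English description precedes it below -/
import Mathlib

section
/- Every nil clean ideal of a ring R is a clean ideal of R; that is, if every element of an ideal I can be written as e + n with e idempotent and n nilpotent in R, then every element of I can be written as e + u with e idempotent and u a unit of R. -/
/-- An ideal `I` of a ring `R` is nil clean if every element of `I` is the sum of
an idempotent and a nilpotent element of `R`. -/
def IsNilCleanIdeal {R : Type*} [Ring R] (I : TwoSidedIdeal R) : Prop :=
  ∀ x ∈ I, ∃ e n : R, IsIdempotentElem e ∧ IsNilpotent n ∧ x = e + n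

theorem exists_isIdempotentElem_isUnit_of_neg_eq_add {R : Type*} [Ring R] {x e n : R}
    (he : IsIdempotentElem e) (hn : IsNilpotent n) (hx : -x = e + n) :
    ∃ e' u : R, IsIdempotentElem e' ∧ IsUnit u ∧ x = e' + u :=
  ⟨1 - e, -(1 + n), he.one_sub, hn.isUnit_one_add.neg, by
    rw [← neg_neg x, hx]; abel⟩

/-- Every nil clean ideal is a clean ideal. -/
theorem nilCleanIdeal_isCleanIdeal {R : Type*} [Ring R] (I : TwoSidedIdeal R)
    (h : IsNilCleanIdeal I) :
    ∀ x ∈ I, ∃ e u : R, IsIdempotentElem e ∧ IsUnit u ∧ x = e + u := by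
  intro x hx
  obtain ⟨e, n, he, hn, hxn⟩ := h (-x) (I.neg_mem hx)
  exact exists_isIdempotentElem_isUnit_of_neg_eq_add he hn hxn
end

section
/- If I is a nil clean ideal of a ring R, then the intersection of I with the Jacobson radical J(R) is a nil ideal: every element of I ∩ J(R) is nilpotent. -/
/-- If `I` is a nil clean ideal of `R`, then `I ∩ J(R)` is nil. -/
theorem nilCleanIdeal_inter_jacobson_nil {R : Type*} [Ring R] (I : TwoSidedIdeal R)
    (h : IsNilCleanIdeal I) :
    ∀ x : R, x ∈ I → x ∈ (⊥ : TwoSidedIdeal R).jacobson → IsNilpotent x := by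
  intro x hxI hxJ
  obtain ⟨e, n, he, hn, hx⟩ := h x hxI
  set J := (⊥ : TwoSidedIdeal R).jacobson with hJ
  -- pass to the quotient by J
  let π : R →+* J.ringCon.Quotient := J.ringCon.mk'
  have hπx : π x = 0 := by
    have h0 : J.ringCon x 0 := (TwoSidedIdeal.mem_iff J x).mp hxJ
    exact (RingCon.eq J.ringCon).mpr h0
  have hπe_nil : IsNilpotent (π e) := by
    have : π e = - π n := by
      have h2 := congrArg π hx
      rw [map_add, hπx] at h2
      exact eq_neg_of_add_eq_zero_left h2.symm
    rw [this]
    exact (hn.map π).neg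
  have hπe_idem : IsIdempotentElem (π e) := by
    simpa [IsIdempotentElem, ← map_mul] using congrArg π he
  have hπe : π e = 0 := hπe_idem.eq_zero_of_isNilpotent hπe_nil
  -- so e ∈ J, hence 1 - e is a unit
  have heJ : e ∈ J := by
    exact (TwoSidedIdeal.mem_iff J e).mpr ((RingCon.eq J.ringCon).mp hπe)
  have heJ' : e ∈ Ideal.jacobson (⊥ : Ideal R) := by
    have : e ∈ TwoSidedIdeal.asIdeal J := heJ
    rw [hJ, TwoSidedIdeal.asIdeal_jacobson] at this
    simpa using this
  obtain ⟨z, hz⟩ := Ideal.mem_jacobson_iff.mp heJ' (-1)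
  rw [Ideal.mem_bot, sub_eq_zero] at hz
  -- hz : z * (-1) * e + z = 1
  have hz' : z * (1 - e) = 1 := by
    rw [mul_sub, mul_one]
    calc z - z * e = z * -1 * e + z := by noncomm_ring
    _ = 1 := hz
  have he0 : e = 0 := by
    calc e = (z * (1 - e)) * e := by rw [hz', one_mul]
    _ = z * (e - e * e) := by noncomm_ring
    _ = 0 := by rw [he.eq, sub_self, mul_zero]
  rw [hx, he0, zero_add]
  exact hn
end

section
/- If R is a nil clean ring (every element is a sum of an idempotent and a nilpotent), then the Jacobson radical J(R) is contained in the set of nilpotent elements of R; in particular J(R) is a nil ideal. -/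
/-- In a two-sided ideal `I`, `(a + b)^m - b^m ∈ I` whenever `a ∈ I`. -/
lemma pow_add_sub_pow_mem {R : Type*} [Ring R] (I : TwoSidedIdeal R) {a : R} (b : R)
    (ha : a ∈ I) : ∀ m : ℕ, (a + b) ^ m - b ^ m ∈ I := by
  intro m
  induction m with
  | zero => simp
  | succ m ih =>
      have : (a + b) ^ (m + 1) - b ^ (m + 1)
          = ((a + b) ^ m - b ^ m) * (a + b) + (b ^ m * a) := by
        rw [pow_succ, pow_succ]; noncomm_ring
      rw [this]
      exact I.add_mem (I.mul_mem_right _ _ ih) (I.mul_mem_left _ _ ha)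

/-- An idempotent in the Jacobson radical is zero. -/
lemma idem_eq_zero_of_mem_jacobson_bot {R : Type*} [Ring R] {e : R}
    (he : IsIdempotentElem e) (hmem : e ∈ (⊥ : TwoSidedIdeal R).jacobson) : e = 0 := by
  rw [TwoSidedIdeal.mem_jacobson_iff] at hmem
  obtain ⟨z, hz⟩ := hmem (-1)
  rw [TwoSidedIdeal.mem_bot] at hz
  -- hz : z * (-1) * e + z - 1 = 0, i.e. z - z * e = 1
  have h1 : z - z * e = 1 := by
    calc z - z * e = (z * (-1) * e + z - 1) + 1 := by noncomm_ring
      _ = 1 := by rw [hz, zero_add]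
  calc e = (z - z * e) * e := by rw [h1, one_mul]
    _ = z * e - z * (e * e) := by noncomm_ring
    _ = 0 := by rw [he.eq]; noncomm_ring

/-- If `R` is a nil clean ring, then the Jacobson radical of `R` is nil. -/
theorem jacobson_nil_of_nilClean {R : Type*} [Ring R]
    (h : ∀ x : R, ∃ e n : R, IsIdempotentElem e ∧ IsNilpotent n ∧ x = e + n) :
    ∀ x : R, x ∈ (⊥ : TwoSidedIdeal R).jacobson → IsNilpotent x := by
  intro x hx
  obtain ⟨e, n, he, ⟨k, hk⟩, hxe⟩ := h x
  rcases Nat.eq_zero_or_pos k with rfl | hkpos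
  · -- `n ^ 0 = 0` forces `1 = 0`, so the ring is trivial
    refine ⟨1, ?_⟩
    have h10 : (1 : R) = 0 := by simpa using hk
    calc x ^ 1 = x * 1 := by rw [pow_one, mul_one]
      _ = 0 := by rw [h10, mul_zero]
  · -- `e = e ^ k = (x - n) ^ k ∈ J` since every term but `(-n)^k = 0` contains `x`
    have hen : e = x + (-n) := by rw [hxe]; abel
    have hmem : e ∈ (⊥ : TwoSidedIdeal R).jacobson := by
      obtain ⟨m, rfl⟩ := Nat.exists_eq_add_of_lt hkpos
      have hpow := pow_add_sub_pow_mem (⊥ : TwoSidedIdeal R).jacobson (-n) hx (0 + m + 1)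
      have hnk : (-n) ^ (0 + m + 1) = 0 := by
        rw [neg_pow, hk, mul_zero]
      rw [← hen, he.pow_succ_eq, hnk, sub_zero] at hpow
      exact hpow
    have he0 : e = 0 := idem_eq_zero_of_mem_jacobson_bot he hmem
    exact ⟨k, by rw [hxe, he0, zero_add, hk]⟩
end

section
/- An ideal I of a ring R is strongly nil clean if and only if I is strongly clean and a - a^2 is nilpotent for all a in I. -/
/-!
Write `x = e + y` with `e` idempotent commuting with `y`, and regroup it as
`x = (1 - e) + (2e - 1 + y)`. Since `2e - 1` squares to `1`, the element `2e - 1 + y` is a unit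
as soon as `y` is nilpotent; conversely `x² - x = y (2e - 1 + y)`, so if `y` is a unit and
`x - x²` is nilpotent, then `2e - 1 + y` is nilpotent.
-/

/-- An ideal is strongly nil clean if each of its elements is the sum of an idempotent and a
nilpotent that commute. -/
def IsStronglyNilCleanIdeal {R : Type*} [Ring R] (I : TwoSidedIdeal R) : Prop :=
  ∀ x ∈ I, ∃ e n : R, IsIdempotentElem e ∧ IsNilpotent n ∧ e * n = n * e ∧ x = e + n

/-- An ideal is strongly clean if each of its elements is the sum of an idempotent and a
unit that commute. -/
def IsStronglyCleanIdeal {R : Type*} [Ring R] (I : TwoSidedIdeal R) : Prop :=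
  ∀ x ∈ I, ∃ e u : R, IsIdempotentElem e ∧ IsUnit u ∧ e * u = u * e ∧ x = e + u

section StronglyClean

variable {R : Type*} [Ring R]

def IsStronglyNilClean (x : R) : Prop :=
  ∃ e n : R, IsIdempotentElem e ∧ IsNilpotent n ∧ Commute e n ∧ x = e + n

def IsStronglyClean (x : R) : Prop :=
  ∃ e u : R, IsIdempotentElem e ∧ IsUnit u ∧ Commute e u ∧ x = e + u

theorem isStronglyNilCleanIdeal_iff_forall (I : TwoSidedIdeal R) :
    IsStronglyNilCleanIdeal I ↔ ∀ x ∈ I, IsStronglyNilClean x :=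
  Iff.rfl

theorem isStronglyCleanIdeal_iff_forall (I : TwoSidedIdeal R) :
    IsStronglyCleanIdeal I ↔ ∀ x ∈ I, IsStronglyClean x :=
  Iff.rfl

variable {e y : R}

theorem Commute.two_mul_sub_one_left (h : Commute e y) : Commute (2 * e - 1) y :=
  ((Commute.ofNat_left 2 y).mul_left h).sub_left (Commute.one_left y)

theorem Commute.one_sub_two_mul_sub_one_add (h : Commute e y) :
    Commute (1 - e) (2 * e - 1 + y) :=
  (Commute.one_left _).sub_left ((Commute.refl e).two_mul_sub_one_left.symm.add_right h)

namespace IsIdempotentElem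

theorem isUnit_two_mul_sub_one (he : IsIdempotentElem e) : IsUnit (2 * e - 1) := by
  refine IsUnit.of_pow_eq_one (n := 2) ?_ two_ne_zero
  calc (2 * e - 1) ^ 2 = 4 * (e * e) - 4 * e + 1 := by noncomm_ring
    _ = 1 := by rw [he.eq]; noncomm_ring

theorem add_sq_sub_self (he : IsIdempotentElem e) (h : Commute e y) :
    (e + y) ^ 2 - (e + y) = y * (2 * e - 1 + y) := by
  have he' : e * e = e := he.eq
  have h' : e * y = y * e := h.eq
  noncomm_ring [he', h']

end IsIdempotentElem

theorem IsStronglyNilClean.isStronglyClean {x : R} (hx : IsStronglyNilClean x) :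
    IsStronglyClean x := by
  obtain ⟨e, n, he, hn, hen, rfl⟩ := hx
  exact ⟨1 - e, 2 * e - 1 + n, he.one_sub, hn.isUnit_add_left_of_commute he.isUnit_two_mul_sub_one
    hen.two_mul_sub_one_left.symm, hen.one_sub_two_mul_sub_one_add,
    by noncomm_ring⟩

theorem IsStronglyNilClean.isNilpotent_sub_sq {x : R} (hx : IsStronglyNilClean x) :
    IsNilpotent (x - x ^ 2) := by
  obtain ⟨e, n, he, hn, hen, rfl⟩ := hx
  have hcomm : Commute n (2 * e - 1 + n) :=
    (hen.two_mul_sub_one_left.add_left (Commute.refl n)).symm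
  rw [← neg_sub, he.add_sq_sub_self hen]
  exact (hcomm.isNilpotent_mul_right hn).neg

theorem IsStronglyClean.isStronglyNilClean {x : R} (hx : IsStronglyClean x)
    (hnil : IsNilpotent (x - x ^ 2)) : IsStronglyNilClean x := by
  obtain ⟨e, u, he, hu, heu, rfl⟩ := hx
  have hcomm : Commute (2 * e - 1 + u) u := heu.two_mul_sub_one_left.add_left (Commute.refl u)
  have hprod : IsNilpotent (u * (2 * e - 1 + u)) := by
    rw [← he.add_sq_sub_self heu, ← neg_sub]
    exact hnil.neg
  exact ⟨1 - e, 2 * e - 1 + u, he.one_sub, (hu.isNilpotent_unit_mul_of_commute_iff hcomm).1 hprod,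
    heu.one_sub_two_mul_sub_one_add, by noncomm_ring⟩

theorem isStronglyNilClean_iff {x : R} :
    IsStronglyNilClean x ↔ IsStronglyClean x ∧ IsNilpotent (x - x ^ 2) :=
  ⟨fun hx => ⟨hx.isStronglyClean, hx.isNilpotent_sub_sq⟩,
    fun ⟨hc, hnil⟩ => hc.isStronglyNilClean hnil⟩

end StronglyClean

/-- An ideal is strongly nil clean iff it is strongly clean and `a - a^2` is nilpotent
for every `a` in the ideal. -/
theorem stronglyNilCleanIdeal_iff {R : Type*} [Ring R] (I : TwoSidedIdeal R) :
    IsStronglyNilCleanIdeal I ↔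
      IsStronglyCleanIdeal I ∧ ∀ a ∈ I, IsNilpotent (a - a ^ 2) := by
  rw [isStronglyNilCleanIdeal_iff_forall, isStronglyCleanIdeal_iff_forall]
  simp only [isStronglyNilClean_iff, forall₂_and]
end

section
/- Every idempotent belonging to a uniquely nil clean ideal of a ring R is central in R. -/
/-- Every idempotent in a uniquely nil clean ideal is central. -/
theorem idem_central_of_uniquelyNilCleanIdeal {R : Type*} [Ring R] (I : TwoSidedIdeal R)
    (h : ∀ a ∈ I, ∃! e : R, IsIdempotentElem e ∧ IsNilpotent (a - e)) :
    ∀ e ∈ I, IsIdempotentElem e → ∀ x : R, e * x = x * e := by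
  intro e he hidem x
  obtain ⟨f, _, huniq⟩ := h e he
  have key : ∀ u : R, e * u = u → u * e = 0 → u = 0 := by
    intro u hu1 hu2
    have hu3 : u * u = 0 := by
      calc u * u = (e * u) * (e * u) := by rw [hu1]
        _ = e * ((u * e) * u) := by rw [mul_assoc, ← mul_assoc u]
        _ = 0 := by rw [hu2, zero_mul, mul_zero]
    have hfidem : IsIdempotentElem (e + u) := by
      unfold IsIdempotentElem
      rw [mul_add, add_mul, add_mul, hidem.eq, hu1, hu2, hu3, add_zero, add_zero]
    have h1 : (e + u) = f := huniq (e + u) ⟨hfidem, ⟨2, by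
      have h0 : e - (e + u) = -u := by abel
      rw [h0, pow_two, neg_mul_neg, hu3]⟩⟩
    have h2 : e = f := huniq e ⟨hidem, ⟨1, by simp⟩⟩
    have h3 : e + u = e := h1.trans h2.symm
    exact add_eq_left.mp h3
  have key2 : ∀ v : R, v * e = v → e * v = 0 → v = 0 := by
    intro v hv1 hv2
    have hv3 : v * v = 0 := by
      calc v * v = (v * e) * v := by rw [hv1]
        _ = v * (e * v) := by rw [mul_assoc]
        _ = 0 := by rw [hv2, mul_zero]
    have hfidem : IsIdempotentElem (e + v) := by
      unfold IsIdempotentElem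
      rw [mul_add, add_mul, add_mul, hidem.eq, hv1, hv2, hv3, add_zero, add_zero]
    have h1 : (e + v) = f := huniq (e + v) ⟨hfidem, ⟨2, by
      have h0 : e - (e + v) = -v := by abel
      rw [h0, pow_two, neg_mul_neg, hv3]⟩⟩
    have h2 : e = f := huniq e ⟨hidem, ⟨1, by simp⟩⟩
    have h3 : e + v = e := h1.trans h2.symm
    exact add_eq_left.mp h3
  have hu' : e * x * (1 - e) = 0 := key (e * x * (1 - e))
    (by rw [← mul_assoc, ← mul_assoc, hidem.eq])
    (by rw [mul_assoc, sub_mul, one_mul, hidem.eq, sub_self, mul_zero])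
  have hv' : (1 - e) * x * e = 0 := key2 ((1 - e) * x * e)
    (by rw [mul_assoc, hidem.eq])
    (by rw [← mul_assoc, ← mul_assoc, mul_sub, mul_one, hidem.eq, sub_self, zero_mul, zero_mul])
  rw [mul_sub, mul_one, sub_eq_zero] at hu'
  rw [sub_mul, one_mul, sub_mul, sub_eq_zero] at hv'
  exact hu'.trans hv'.symm
end

section
/- If I is a nil clean ideal of a ring R and x ∈ I with x = e + n for an idempotent e of R and nilpotent n of R, then both e and n belong to I. Consequently, an ideal I is nil clean if and only if every element of I is a sum of an idempotent lying in I and a nilpotent lying in I. -/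
lemma IsIdempotentElem.eq_zero_of_isNilpotent' {M : Type*} [MonoidWithZero M] {a : M}
    (he : IsIdempotentElem a) (hn : IsNilpotent a) : a = 0 := by
  obtain ⟨k, hk⟩ := hn
  calc a = a ^ (k + 1) := (he.pow_succ_eq k).symm
  _ = a ^ k * a := pow_succ a k
  _ = 0 := by rw [hk, zero_mul]

lemma mem_of_idem_nilpotent {R : Type*} [Ring R] (I : TwoSidedIdeal R) {x e n : R}
    (hx : x ∈ I) (he : IsIdempotentElem e) (hn : IsNilpotent n) (hxen : x = e + n) :
    e ∈ I ∧ n ∈ I := by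
  let f : R →+* I.ringCon.Quotient := I.ringCon.mk'
  have hfx : f x = 0 := by
    have : I.ringCon x 0 := hx
    exact (RingCon.eq I.ringCon).mpr this
  have hfe : f e = 0 := by
    have hidem : IsIdempotentElem (f e) := he.map f
    have hnil : IsNilpotent (f e) := by
      have : f e = - f n := by
        have := congrArg f hxen
        rw [map_add, hfx] at this
        rw [eq_comm, add_eq_zero_iff_eq_neg] at this; exact this
      rw [this]
      exact (hn.map f).neg
    exact hidem.eq_zero_of_isNilpotent' hnil
  have heI : e ∈ I := by
    rw [TwoSidedIdeal.mem_iff]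
    exact (RingCon.eq I.ringCon).mp hfe
  refine ⟨heI, ?_⟩
  have : n = x - e := by rw [hxen]; abel
  rw [this]
  exact I.sub_mem hx heI

/-- In a nil clean ideal, the idempotent and nilpotent of any nil clean decomposition of an
element of the ideal lie in the ideal; consequently `I` is nil clean iff every element of `I`
is the sum of an idempotent in `I` and a nilpotent in `I`. -/
theorem nilCleanIdeal_idem_nilpotent_mem {R : Type*} [Ring R] (I : TwoSidedIdeal R) :
    (IsNilCleanIdeal I → ∀ x ∈ I, ∀ e n : R, IsIdempotentElem e → IsNilpotent n →
      x = e + n → e ∈ I ∧ n ∈ I) ∧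
    (IsNilCleanIdeal I ↔
      ∀ x ∈ I, ∃ e n : R, e ∈ I ∧ n ∈ I ∧ IsIdempotentElem e ∧ IsNilpotent n ∧ x = e + n) := by
  constructor
  · intro _ x hx e n he hn hxen
    exact mem_of_idem_nilpotent I hx he hn hxen
  · constructor
    · intro h x hx
      obtain ⟨e, n, he, hn, hxen⟩ := h x hx
      obtain ⟨heI, hnI⟩ := mem_of_idem_nilpotent I hx he hn hxen
      exact ⟨e, n, heI, hnI, he, hn, hxen⟩
    · intro h x hx
      obtain ⟨e, n, _, _, he, hn, hxen⟩ := h x hx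
      exact ⟨e, n, he, hn, hxen⟩
end

section
/- A ring R is nil clean if and only if there exists a central idempotent e ∈ R such that the two-sided ideals generated by e and by 1 - e are both nil clean ideals of R. -/
section

variable {R : Type*} [Ring R]

def IsNilCleanElem (x : R) : Prop :=
  ∃ f n : R, IsIdempotentElem f ∧ IsNilpotent n ∧ x = f + n

lemma mul_mul_mul_eq_zero_of_central {e f : R} (hc : ∀ x : R, Commute e x) (hef : e * f = 0)
    (a b : R) : a * e * (b * f) = 0 := by
  rw [mul_assoc, ← mul_assoc e, (hc b).eq, mul_assoc, hef, mul_zero, mul_zero]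

namespace IsNilCleanElem

variable {e : R} (he : IsIdempotentElem e) (hc : ∀ x : R, Commute e x)
include he hc

lemma exists_mul_central_idem {y : R} (hy : IsNilCleanElem y) :
    ∃ f n : R, IsIdempotentElem (f * e) ∧ IsNilpotent (n * e) ∧ y * e = f * e + n * e := by
  obtain ⟨f, n, hf, hn, rfl⟩ := hy
  exact ⟨f, n, hf.mul_of_commute (hc f).symm he, (hc n).symm.isNilpotent_mul_right hn,
    add_mul f n e⟩

theorem mul_add_mul_one_sub {a b : R} (ha : IsNilCleanElem (a * e))
    (hb : IsNilCleanElem (b * (1 - e))) : IsNilCleanElem (a * e + b * (1 - e)) := by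
  have hc' : ∀ x : R, Commute (1 - e) x := fun x => (Commute.one_left x).sub_left (hc x)
  obtain ⟨f, n, hf, hn, ha'⟩ := ha.exists_mul_central_idem he hc
  obtain ⟨g, m, hg, hm, hb'⟩ := hb.exists_mul_central_idem he.one_sub hc'
  rw [mul_assoc, he.eq] at ha'
  rw [mul_assoc, he.one_sub.eq] at hb'
  have orth (x y : R) : x * e * (y * (1 - e)) = 0 :=
    mul_mul_mul_eq_zero_of_central hc he.mul_one_sub_self x y
  have orth' (x y : R) : x * (1 - e) * (y * e) = 0 :=
    mul_mul_mul_eq_zero_of_central hc' he.one_sub_mul_self x y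
  refine ⟨f * e + g * (1 - e), n * e + m * (1 - e), hf.add hg ?_, ?_, ?_⟩
  · rw [orth, orth', add_zero]
  · exact Commute.isNilpotent_add ((orth n m).trans (orth' m n).symm) hn hm
  · rw [ha', hb']
    abel

end IsNilCleanElem

end

/-- `R` is nil clean iff there is a central idempotent `e` such that the ideals generated by
`e` and `1 - e` are both nil clean ideals. -/
theorem nilClean_iff_exists_central_idem {R : Type*} [Ring R] :
    (∀ x : R, ∃ e n : R, IsIdempotentElem e ∧ IsNilpotent n ∧ x = e + n) ↔
      ∃ e : R, IsIdempotentElem e ∧ (∀ x : R, e * x = x * e) ∧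
        IsNilCleanIdeal (TwoSidedIdeal.span {e}) ∧
        IsNilCleanIdeal (TwoSidedIdeal.span {1 - e}) := by
  constructor
  · intro h
    exact ⟨1, .one, Commute.one_left, fun x _ => h x, fun x _ => h x⟩
  · rintro ⟨e, he, hc, hI, hJ⟩ x
    have hxe := hI (x * e) (TwoSidedIdeal.mul_mem_left _ _ _ (TwoSidedIdeal.subset_span rfl))
    have hxe' := hJ (x * (1 - e))
      (TwoSidedIdeal.mul_mem_left _ _ _ (TwoSidedIdeal.subset_span rfl))
    have hx := IsNilCleanElem.mul_add_mul_one_sub he hc hxe hxe'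
    rwa [← mul_add, add_sub_cancel, mul_one] at hx
end

section
/- A ring R is nil clean if and only if there exists a complete orthogonal set of central idempotents e_1, ..., e_n (i.e., e_i e_j = 0 for i ≠ j and e_1 + ... + e_n = 1) such that the ideal generated by e_i is a nil clean ideal of R for each i. -/
/-- `R` is nil clean iff there is a complete orthogonal set of central idempotents
`e 1, ..., e n` such that each ideal generated by `e i` is a nil clean ideal. -/
theorem nilClean_iff_exists_complete_orthogonal_central_idems {R : Type*} [Ring R] :
    (∀ x : R, ∃ e n : R, IsIdempotentElem e ∧ IsNilpotent n ∧ x = e + n) ↔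
      ∃ (n : ℕ) (e : Fin n → R),
        (∀ i, IsIdempotentElem (e i)) ∧
        (∀ i, ∀ x : R, e i * x = x * e i) ∧
        (∀ i j, i ≠ j → e i * e j = 0) ∧
        (∑ i, e i = 1) ∧
        ∀ i, IsNilCleanIdeal (TwoSidedIdeal.span {e i}) := by
  constructor
  · intro h
    refine ⟨1, fun _ => 1, fun _ => by simp [IsIdempotentElem], fun _ x => by simp,
      fun i j hij => absurd (Subsingleton.elim i j) hij, by simp, fun i x _ => h x⟩
  · rintro ⟨n, e, hidem, hcentral, horth, hsum, hnc⟩ x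
    -- decompose each e i * x
    have hmem : ∀ i, e i * x ∈ TwoSidedIdeal.span {e i} := fun i =>
      TwoSidedIdeal.mul_mem_right _ _ _ (TwoSidedIdeal.subset_span rfl)
    choose f m hf hm hfm using fun i => hnc i (e i * x) (hmem i)
    -- replace with e i * f i and e i * m i
    set F : Fin n → R := fun i => e i * f i with hF
    set M : Fin n → R := fun i => e i * m i with hM
    have hdecomp : ∀ i, e i * x = F i + M i := by
      intro i
      have : e i * (e i * x) = e i * x := by
        rw [← mul_assoc, hidem i]
      rw [hF, hM]
      calc e i * x = e i * (e i * x) := this.symm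
        _ = e i * (f i + m i) := by rw [hfm i]
        _ = e i * f i + e i * m i := mul_add _ _ _
    have hFidem : ∀ i, IsIdempotentElem (F i) := by
      intro i
      show (e i * f i) * (e i * f i) = e i * f i
      rw [mul_assoc, ← mul_assoc (f i), ← hcentral i (f i), ← mul_assoc, ← mul_assoc,
        hidem i, mul_assoc, hf i]
    have hForth : ∀ i j, i ≠ j → F i * F j = 0 := by
      intro i j hij
      show (e i * f i) * (e j * f j) = 0
      rw [mul_assoc, ← mul_assoc (f i), ← hcentral j (f i), ← mul_assoc, ← mul_assoc,
        horth i j hij, zero_mul, zero_mul]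
    have hMorth : ∀ i j, i ≠ j → M i * M j = 0 := by
      intro i j hij
      show (e i * m i) * (e j * m j) = 0
      rw [mul_assoc, ← mul_assoc (m i), ← hcentral j (m i), ← mul_assoc, ← mul_assoc,
        horth i j hij, zero_mul, zero_mul]
    refine ⟨∑ i, F i, ∑ i, M i, ?_, ?_, ?_⟩
    · show (∑ i, F i) * (∑ i, F i) = ∑ i, F i
      have key : ∀ i ∈ (Finset.univ : Finset (Fin n)), ∑ j, F i * F j = F i := by
        intro i _
        rw [Finset.sum_eq_single i (fun j _ hj => hForth i j (Ne.symm hj)) (by simp), hFidem i]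
      rw [Finset.sum_mul_sum, Finset.sum_congr rfl key]
    · refine Commute.isNilpotent_sum (fun i _ => ?_) (fun i j _ _ => ?_)
      · obtain ⟨k, hk⟩ := hm i
        refine ⟨k, ?_⟩
        show (e i * m i) ^ k = 0
        have hc : Commute (e i) (m i) := hcentral i (m i)
        rw [hc.mul_pow, hk, mul_zero]
      · by_cases hij : i = j
        · subst hij; exact Commute.refl _
        · show M i * M j = M j * M i
          rw [hMorth i j hij, hMorth j i (Ne.symm hij)]
    · calc x = (∑ i, e i) * x := by rw [hsum, one_mul]
        _ = ∑ i, e i * x := Finset.sum_mul _ _ _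
        _ = ∑ i, (F i + M i) := Finset.sum_congr rfl (fun i _ => hdecomp i)
        _ = ∑ i, F i + ∑ i, M i := Finset.sum_add_distrib
end

section
/- Let R be a ring, I a nil ideal of R, and I₁ an ideal of R containing I. Then I₁ is a nil clean ideal of R if and only if I₁/I is a nil clean ideal of R/I. -/
section aux

variable {R : Type*} [Ring R] (I : TwoSidedIdeal R)

lemma hsurj : Function.Surjective (RingCon.mk' I.ringCon) := fun y =>
  Quot.exists_rep y

lemma hsurj' (y : I.ringCon.Quotient) : y ∈ (RingCon.mk' I.ringCon).range := by
  obtain ⟨x, rfl⟩ := hsurj I y; exact ⟨x, rfl⟩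

lemma mem_ker_mk'_iff {x : R} : x ∈ RingHom.ker (RingCon.mk' I.ringCon) ↔ x ∈ I := by
  rw [RingHom.mem_ker]
  change (x : I.ringCon.Quotient) = (0 : R) ↔ _
  rw [RingCon.eq, I.rel_iff, sub_zero]

/-- The image of an ideal under the quotient map, as a two-sided ideal. -/
def imageIdeal (I₁ : TwoSidedIdeal R) : TwoSidedIdeal I.ringCon.Quotient :=
  TwoSidedIdeal.mk' {y | ∃ x ∈ I₁, RingCon.mk' I.ringCon x = y}
    ⟨0, I₁.zero_mem, map_zero _⟩
    (by rintro _ _ ⟨a, ha, rfl⟩ ⟨b, hb, rfl⟩; exact ⟨a + b, I₁.add_mem ha hb, map_add _ _ _⟩)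
    (by rintro _ ⟨a, ha, rfl⟩; exact ⟨-a, I₁.neg_mem ha, map_neg _ _⟩)
    (by
      rintro y _ ⟨a, ha, rfl⟩
      obtain ⟨b, rfl⟩ := hsurj I y
      exact ⟨b * a, I₁.mul_mem_left _ _ ha, map_mul _ _ _⟩)
    (by
      rintro _ y ⟨a, ha, rfl⟩
      obtain ⟨b, rfl⟩ := hsurj I y
      exact ⟨a * b, I₁.mul_mem_right _ _ ha, map_mul _ _ _⟩)

lemma mem_map_iff (I₁ : TwoSidedIdeal R) {y : I.ringCon.Quotient} :
    y ∈ I₁.map (RingCon.mk' I.ringCon) ↔ ∃ x ∈ I₁, RingCon.mk' I.ringCon x = y := by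
  constructor
  · intro hy
    have := TwoSidedIdeal.mem_span_iff.mp hy (imageIdeal I I₁) ?_
    · rwa [imageIdeal, TwoSidedIdeal.mem_mk'] at this
    · rintro _ ⟨x, hx, rfl⟩
      rw [SetLike.mem_coe, imageIdeal, TwoSidedIdeal.mem_mk']
      exact ⟨x, hx, rfl⟩
  · rintro ⟨x, hx, rfl⟩
    exact TwoSidedIdeal.subset_span ⟨x, hx, rfl⟩

end aux

/-- If `I` is a nil ideal contained in an ideal `I₁`, then `I₁` is a nil clean ideal of `R`
iff `I₁/I` is a nil clean ideal of `R/I`. -/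
theorem nilCleanIdeal_iff_quotient {R : Type*} [Ring R] (I I₁ : TwoSidedIdeal R)
    (hnil : ∀ x ∈ I, IsNilpotent x) (hle : I ≤ I₁) :
    IsNilCleanIdeal I₁ ↔ IsNilCleanIdeal (I₁.map (RingCon.mk' I.ringCon)) := by
  set π := RingCon.mk' I.ringCon with hπ
  have hker : ∀ x ∈ RingHom.ker π, IsNilpotent x := fun x hx =>
    hnil x ((mem_ker_mk'_iff I).mp hx)
  constructor
  · -- forward: push the decomposition through π
    intro h y hy
    obtain ⟨x, hx, rfl⟩ := (mem_map_iff I I₁).mp hy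
    obtain ⟨e, n, he, hn, rfl⟩ := h x hx
    exact ⟨π e, π n, he.map π, hn.map π, map_add _ _ _⟩
  · intro h x hx
    obtain ⟨eb, nb, heb, hnb, hsum⟩ :=
      h (π x) ((mem_map_iff I I₁).mpr ⟨x, hx, rfl⟩)
    -- lift the idempotent
    obtain ⟨e, he, hπe⟩ := exists_isIdempotentElem_eq_of_ker_isNilpotent π hker eb
      (hsurj' I eb) heb
    refine ⟨e, x - e, he, ?_, by abel⟩
    -- x - e maps to the nilpotent nb, and ker π is nil, so x - e is nilpotent
    have hmap : π (x - e) = nb := by rw [map_sub, hπe, hsum]; abel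
    obtain ⟨k, hk⟩ := hnb
    have : (x - e) ^ k ∈ RingHom.ker π := by
      rw [RingHom.mem_ker, map_pow, hmap, hk]
    obtain ⟨m, hm⟩ := hker _ this
    exact ⟨k * m, by rw [pow_mul, hm]⟩
end

section
/- An ideal I of a ring R is nil clean if and only if Tₙ(I), the set of n×n upper triangular matrices with entries in I, is a nil clean ideal of the ring Tₙ(R) of n×n upper triangular matrices over R. -/
/-- `M` is an upper triangular matrix. -/
def IsUpperTri {R : Type*} [Ring R] {n : ℕ} (M : Matrix (Fin n) (Fin n) R) : Prop :=
  ∀ i j, j < i → M i j = 0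

section Aux

variable {R : Type*} [Ring R] {n : ℕ}

lemma IsUpperTri.mul {A B : Matrix (Fin n) (Fin n) R} (hA : IsUpperTri A) (hB : IsUpperTri B) :
    IsUpperTri (A * B) := by
  intro i j hij
  rw [Matrix.mul_apply]
  apply Finset.sum_eq_zero
  intro k _
  rcases lt_or_ge k i with h | h
  · rw [hA i k h, zero_mul]
  · rw [hB k j (lt_of_lt_of_le hij h), mul_zero]

lemma IsUpperTri.one : IsUpperTri (1 : Matrix (Fin n) (Fin n) R) := by
  intro i j hij
  exact Matrix.one_apply_ne (ne_of_gt hij)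

lemma IsUpperTri.pow {A : Matrix (Fin n) (Fin n) R} (hA : IsUpperTri A) (k : ℕ) :
    IsUpperTri (A ^ k) := by
  induction k with
  | zero => simpa using IsUpperTri.one
  | succ k ih => rw [pow_succ]; exact ih.mul hA

lemma mul_diag {A B : Matrix (Fin n) (Fin n) R} (hA : IsUpperTri A) (hB : IsUpperTri B)
    (i : Fin n) : (A * B) i i = A i i * B i i := by
  rw [Matrix.mul_apply]
  apply Finset.sum_eq_single_of_mem i (Finset.mem_univ i)
  intro k _ hk
  rcases lt_or_gt_of_ne hk with h | h
  · rw [hA i k h, zero_mul]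
  · rw [hB k i h, mul_zero]

lemma pow_diag {A : Matrix (Fin n) (Fin n) R} (hA : IsUpperTri A) (k : ℕ) (i : Fin n) :
    (A ^ k) i i = (A i i) ^ k := by
  induction k with
  | zero => simp [Matrix.one_apply_eq]
  | succ k ih => rw [pow_succ, pow_succ, mul_diag (hA.pow k) hA, ih]

lemma strict_pow {S : Matrix (Fin n) (Fin n) R} (hS : ∀ i j : Fin n, (j : ℕ) ≤ i → S i j = 0)
    (k : ℕ) : ∀ i j : Fin n, (j : ℕ) < i + k → (S ^ k) i j = 0 := by
  induction k with
  | zero =>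
    intro i j hij
    rw [pow_zero]
    exact Matrix.one_apply_ne (by simp at hij; exact fun h => absurd (Fin.val_eq_of_eq h.symm) (Nat.ne_of_lt hij))
  | succ k ih =>
    intro i j hij
    rw [pow_succ', Matrix.mul_apply]
    apply Finset.sum_eq_zero
    intro l _
    rcases le_or_gt (l : ℕ) i with h | h
    · rw [hS i l h, zero_mul]
    · rw [ih l j (by omega), mul_zero]

lemma isNilpotent_of_upperTri {A : Matrix (Fin n) (Fin n) R} (hA : IsUpperTri A)
    (hd : ∀ i, IsNilpotent (A i i)) : IsNilpotent A := by
  choose k hk using hd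
  set m := (Finset.univ.sup k) + 1 with hm
  have hmz : ∀ i, (A i i) ^ m = 0 := by
    intro i
    have hle : k i ≤ m := le_trans (Finset.le_sup (Finset.mem_univ i)) (Nat.le_succ _)
    rw [← Nat.sub_add_cancel hle, pow_add, hk, mul_zero]
  have hS : ∀ i j : Fin n, (j : ℕ) ≤ i → (A ^ m) i j = 0 := by
    intro i j hij
    rcases lt_or_eq_of_le hij with h | h
    · exact (hA.pow m) i j (by exact_mod_cast h)
    · have : j = i := Fin.ext h
      subst this
      rw [pow_diag hA m j, hmz]
  refine ⟨m * n, ?_⟩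
  rw [pow_mul]
  ext i j
  have := strict_pow hS n i j (by omega)
  simpa using this

end Aux

/-- An ideal `I` of `R` is nil clean iff `Tₙ(I)` is a nil clean ideal of the ring `Tₙ(R)` of
upper triangular `n × n` matrices: every upper triangular matrix with entries in `I` is the
sum of an idempotent and a nilpotent of `Tₙ(R)`. -/
theorem nilCleanIdeal_iff_upperTriangular {R : Type*} [Ring R] (n : ℕ) (hn : 0 < n)
    (I : TwoSidedIdeal R) :
    IsNilCleanIdeal I ↔
      ∀ A : Matrix (Fin n) (Fin n) R, IsUpperTri A → (∀ i j, A i j ∈ I) →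
        ∃ E N : Matrix (Fin n) (Fin n) R, IsUpperTri E ∧ IsUpperTri N ∧
          IsIdempotentElem E ∧ IsNilpotent N ∧ A = E + N := by
  constructor
  · intro h A hA hAI
    choose e f he hf heq using fun i => h (A i i) (hAI i i)
    refine ⟨Matrix.diagonal e, A - Matrix.diagonal e, ?_, ?_, ?_, ?_, by abel⟩
    · intro i j hij
      exact Matrix.diagonal_apply_ne e (ne_of_gt hij)
    · intro i j hij
      rw [Matrix.sub_apply, hA i j hij, Matrix.diagonal_apply_ne e (ne_of_gt hij), sub_zero]
    · show _ * _ = _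
      rw [Matrix.diagonal_mul_diagonal]
      exact congrArg Matrix.diagonal (funext he)
    · apply isNilpotent_of_upperTri
      · intro i j hij
        rw [Matrix.sub_apply, hA i j hij, Matrix.diagonal_apply_ne e (ne_of_gt hij), sub_zero]
      · intro i
        have : (A - Matrix.diagonal e) i i = f i := by
          rw [Matrix.sub_apply, Matrix.diagonal_apply_eq, heq i]
          abel
        rw [this]
        exact hf i
  · intro h x hx
    set A : Matrix (Fin n) (Fin n) R := Matrix.diagonal (fun _ => x) with hA
    obtain ⟨E, N, hE, hN, hEi, hNn, hsum⟩ := h A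
      (fun i j hij => Matrix.diagonal_apply_ne _ (ne_of_gt hij))
      (fun i j => by
        rcases eq_or_ne i j with rfl | hij
        · simpa [hA] using hx
        · simp [hA, Matrix.diagonal_apply_ne _ hij, I.zero_mem])
    set i0 : Fin n := ⟨0, hn⟩
    refine ⟨E i0 i0, N i0 i0, ?_, ?_, ?_⟩
    · show _ * _ = _
      rw [← mul_diag hE hE i0, hEi]
    · obtain ⟨k, hk⟩ := hNn
      exact ⟨k, by rw [← pow_diag hN k i0, hk, Matrix.zero_apply]⟩
    · have := congrFun (congrFun hsum i0) i0
      simpa [hA] using this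
end

section
/- Let T be the ring of 2×2 upper triangular matrices over a ring R, and let I and J be ideals of R. Then the ideal of T consisting of matrices [[a, r],[0, b]] with a ∈ I, r ∈ R, b ∈ J is a nil clean ideal of T if and only if I and J are nil clean ideals of R. -/
/-- `M` is an upper triangular `2 × 2` matrix. -/
def IsUpperTri2 {R : Type*} [Ring R] (M : Matrix (Fin 2) (Fin 2) R) : Prop :=
  M 1 0 = 0

private lemma pow_entries {R : Type*} [Ring R] (M : Matrix (Fin 2) (Fin 2) R)
    (hM : M 1 0 = 0) (k : ℕ) :
    (M ^ k) 1 0 = 0 ∧ (M ^ k) 0 0 = (M 0 0) ^ k ∧ (M ^ k) 1 1 = (M 1 1) ^ k := by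
  induction k with
  | zero => simp [Matrix.one_apply]
  | succ k ih =>
    obtain ⟨h1, h2, h3⟩ := ih
    refine ⟨?_, ?_, ?_⟩ <;>
      simp [pow_succ, Matrix.mul_apply, Fin.sum_univ_two, h1, h2, h3, hM]

/-- The ideal `[[I, R], [0, J]]` of the ring `T` of upper triangular `2 × 2` matrices over `R`
is a nil clean ideal of `T` iff `I` and `J` are nil clean ideals of `R`. -/
theorem triangular2_nilCleanIdeal_iff {R : Type*} [Ring R] (I J : TwoSidedIdeal R) :
    (∀ A : Matrix (Fin 2) (Fin 2) R, IsUpperTri2 A → A 0 0 ∈ I → A 1 1 ∈ J →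
      ∃ E N : Matrix (Fin 2) (Fin 2) R, IsUpperTri2 E ∧ IsUpperTri2 N ∧
        IsIdempotentElem E ∧ IsNilpotent N ∧ A = E + N) ↔
      IsNilCleanIdeal I ∧ IsNilCleanIdeal J := by
  constructor
  · intro h
    constructor
    · intro x hx
      obtain ⟨E, N, hEt, hNt, hEi, ⟨k, hk⟩, hsum⟩ :=
        h (Matrix.of ![![x, 0], ![0, 0]]) rfl (by simpa using hx) (by simpa using J.zero_mem)
      refine ⟨E 0 0, N 0 0, ?_, ⟨k, ?_⟩, ?_⟩
      · have hEt' : E 1 0 = 0 := hEt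
        have := congrFun (congrFun hEi 0) 0
        show E 0 0 * E 0 0 = E 0 0
        simpa [Matrix.mul_apply, Fin.sum_univ_two, hEt'] using this
      · rw [← (pow_entries N hNt k).2.1, hk]; simp
      · have := congrFun (congrFun hsum 0) 0
        simpa using this
    · intro y hy
      obtain ⟨E, N, hEt, hNt, hEi, ⟨k, hk⟩, hsum⟩ :=
        h (Matrix.of ![![0, 0], ![0, y]]) rfl (by simpa using I.zero_mem) (by simpa using hy)
      refine ⟨E 1 1, N 1 1, ?_, ⟨k, ?_⟩, ?_⟩
      · have hEt' : E 1 0 = 0 := hEt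
        have := congrFun (congrFun hEi 1) 1
        show E 1 1 * E 1 1 = E 1 1
        simpa [Matrix.mul_apply, Fin.sum_univ_two, hEt'] using this
      · rw [← (pow_entries N hNt k).2.2, hk]; simp
      · have := congrFun (congrFun hsum 1) 1
        simpa using this
  · rintro ⟨hI, hJ⟩ A hA hA0 hA1
    obtain ⟨e1, n1, he1, ⟨p, hp⟩, hx1⟩ := hI _ hA0
    obtain ⟨e2, n2, he2, ⟨q, hq⟩, hx2⟩ := hJ _ hA1
    refine ⟨Matrix.of ![![e1, 0], ![0, e2]], Matrix.of ![![n1, A 0 1], ![0, n2]],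
      rfl, rfl, ?_, ?_, ?_⟩
    · show _ * _ = _
      ext i j
      fin_cases i <;> fin_cases j <;>
        simp [Matrix.mul_apply, Fin.sum_univ_two, he1.eq, he2.eq]
    · set N := Matrix.of ![![n1, A 0 1], ![0, n2]] with hNdef
      have hNt : N 1 0 = 0 := rfl
      have h00 : (N ^ p) 0 0 = 0 := by
        rw [(pow_entries N hNt p).2.1]; show n1 ^ p = 0; exact hp
      have h10p : (N ^ p) 1 0 = 0 := (pow_entries N hNt p).1
      have h11 : (N ^ q) 1 1 = 0 := by
        rw [(pow_entries N hNt q).2.2]; show n2 ^ q = 0; exact hq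
      have h10q : (N ^ q) 1 0 = 0 := (pow_entries N hNt q).1
      refine ⟨p + q, ?_⟩
      rw [pow_add]
      ext i j
      fin_cases i <;> fin_cases j <;>
        simp [Matrix.mul_apply, Fin.sum_univ_two, h00, h10p, h11, h10q]
    · have hA' : A 1 0 = 0 := hA
      ext i j
      fin_cases i <;> fin_cases j <;>
        simp [hx1, hx2, hA']
end
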